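/- For any r ∈ k, a letter a, and a word w in a quasi-shuffle algebra, Σ^r(aw) = a·Σ^r(w) + r·(a⋄Σ^r(w)), where a⋄u denotes ⋄-multiplying a into the first letter of u (extended linearly, with a⋄1 = 0). -/

import Mathlib

/-!
Quasi-shuffle algebras (Hoffman–Ihara).  We model the span `kA` of the alphabet
(with its commutative associative product `⋄`, written `*` in `L`) as a
non-unital commutative `k`-algebra `L`, and the word algebra `k⟨A⟩` as the
tensor algebra `TensorAlgebra k L`, in which a word `a₁⋯aₙ` is the product
`ι a₁ * ⋯ * ι aₙ`.
-/

open TensorAlgebra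

variable (k : Type*) [Field k]
variable {L : Type*} [NonUnitalCommRing L] [Module k L]
  [SMulCommClass k L L] [IsScalarTower k L L]

/-- The word `a₁⋯aₙ` as an element of the tensor algebra. -/
def word (l : List L) : TensorAlgebra k L := (l.map fun a => TensorAlgebra.ι k a).prod

/-- The `⋄`-product of the letters of a nonempty block (junk value `0` on `[]`). -/
def blockProd : List L → L
  | [] => 0
  | a :: t => t.foldl (· * ·) a

/-- The Hoffman–Ihara operator `Ψ_f` on words, for `f = c₁t + c₂t² + ⋯`:
`Ψ_f(w) = Σ_{(i₁,…,i_m) composition of ℓ(w)} c_{i₁}⋯c_{i_m} I[w]`,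
written via the recursion on the first block. -/
def psi (c : ℕ → k) : List L → TensorAlgebra k L
  | [] => 1
  | a :: w => ∑ j ∈ Finset.range (w.length + 1),
      c (j + 1) • (TensorAlgebra.ι k (blockProd (a :: w.take j)) * psi c (w.drop j))
  termination_by l => l.length
  decreasing_by simp [List.length_drop] <;> omega

/-!
Split the compositions of `ℓ(aw)` by their first part. Those starting with `1` contribute
`a · Σ^r(w)`. The others correspond to compositions of `ℓ(w)`, with the first part
lengthened by one: the first block gains the factor `a ⋄`, and the weight
`r^{ℓ - #parts}` gains one factor `r`. Since `a ⋄ -` is only prescribed on words, it is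
pulled through the remaining sum using that words span `k⟨A⟩`.
-/

section

omit [SMulCommClass k L L] [IsScalarTower k L L]

@[simp]
lemma word_nil : word k ([] : List L) = 1 := by
  simp [word]

@[simp]
lemma word_cons (a : L) (u : List L) : word k (a :: u) = ι k a * word k u := by
  simp [word]

lemma word_append (u v : List L) : word k (u ++ v) = word k u * word k v := by
  simp [word]

lemma span_range_word : Submodule.span k (Set.range (word k (L := L))) = ⊤ := by
  have hclosure : (Submonoid.closure (Set.range (ι k (M := L))) : Set (TensorAlgebra k L)) ⊆
      Set.range (word k) := by
    intro x hx
    induction hx using Submonoid.closure_induction with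
    | mem x hx =>
      obtain ⟨a, rfl⟩ := hx
      exact ⟨[a], by simp⟩
    | one => exact ⟨[], word_nil k⟩
    | mul x y _ _ hx hy =>
      obtain ⟨u, rfl⟩ := hx
      obtain ⟨v, rfl⟩ := hy
      exact ⟨u ++ v, word_append k u v⟩
  rw [eq_top_iff, ← Algebra.top_toSubmodule, ← adjoin_range_ι, Algebra.adjoin_eq_span]
  exact Submodule.span_mono hclosure

lemma LinearMap.ext_word {M : Type*} [AddCommGroup M] [Module k M]
    {f g : TensorAlgebra k L →ₗ[k] M} (h : ∀ l, f (word k l) = g (word k l)) : f = g :=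
  LinearMap.ext_on_range (span_range_word k) h

lemma mul_foldl_mul (a : L) (s : List L) (b : L) :
    a * s.foldl (· * ·) b = s.foldl (· * ·) (a * b) := by
  induction s generalizing b with
  | nil => rfl
  | cons x t ih => simpa [mul_assoc] using ih (b * x)

lemma mul_blockProd_cons (a b : L) (s : List L) :
    a * blockProd (b :: s) = blockProd (a * b :: s) :=
  mul_foldl_mul a s b

lemma psi_nil (c : ℕ → k) : psi k c ([] : List L) = 1 := by
  rw [psi]

lemma psi_singleton (c : ℕ → k) (a : L) : psi k c [a] = c 1 • ι k a := by
  simp [psi, blockProd, psi_nil]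

lemma psi_cons_cons (c : ℕ → k) (a b : L) (v : List L) :
    psi k c (a :: b :: v) = c 1 • (ι k a * psi k c (b :: v)) +
      ∑ j ∈ Finset.range (v.length + 1),
        c (j + 2) • (ι k (a * blockProd (b :: v.take j)) * psi k c (v.drop j)) := by
  rw [psi, Finset.sum_range_succ', add_comm]
  simp only [List.length_cons, List.take_zero, List.drop_zero, List.take_succ_cons,
    List.drop_succ_cons, mul_blockProd_cons, zero_add]
  rfl

end

/--
For `r ∈ k`, a letter `a` and a word `w`,
`Σ^r(aw) = a·Σ^r(w) + r·(a ⋄ Σ^r(w))`, where `D a = a ⋄ -` is the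
first-letter `⋄`-action (with `a ⋄ 1 = 0`).
-/
theorem stmt7 (r : k)
    (Sr : TensorAlgebra k L →ₗ[k] TensorAlgebra k L)
    (hSr : ∀ w : List L, Sr (word k w) = psi k (fun n => r ^ (n - 1)) w)
    (D : L → TensorAlgebra k L →ₗ[k] TensorAlgebra k L)
    (hD1 : ∀ a : L, D a 1 = 0)
    (hDw : ∀ (a c : L) (u : List L),
      D a (TensorAlgebra.ι k c * word k u) = TensorAlgebra.ι k (a * c) * word k u) :
    ∀ (a : L) (w : List L),
      Sr (word k (a :: w)) = TensorAlgebra.ι k a * Sr (word k w) + r • D a (Sr (word k w)) := by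
  intro a w
  have hD (b : L) (x : TensorAlgebra k L) : D a (ι k b * x) = ι k (a * b) * x :=
    LinearMap.congr_fun (LinearMap.ext_word k (f := D a ∘ₗ LinearMap.mulLeft k (ι k b))
      (g := LinearMap.mulLeft k (ι k (a * b))) (hDw a b)) x
  rw [hSr, hSr]
  cases w with
  | nil => simp [psi_singleton, psi_nil, hD1]
  | cons b v =>
    rw [psi_cons_cons]
    congr 1
    · simp
    rw [psi, map_sum, Finset.smul_sum]
    refine Finset.sum_congr rfl fun j _ => ?_
    rw [map_smul, hD, smul_smul]
    congr 1
    simp [pow_succ']
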